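/- arXiv:2311.09941 — 3 statements merged into one kernel-verified Lean document; each statement's English description precedes it below -/
import Mathlib

section
/- Let L be a laminar family over a finite ground set N, let S ⊆ N, and let L ∈ L be a set crossing S (i.e., S∩L, S∖L, L∖S are all nonempty and S∪L ≠ N). Then every set in L that crosses S∪L also crosses S; in particular, the collection of members of L crossing S∪L is a strict subset of the collection of members of L crossing S (since L crosses S but not S∪L). -/
/-- Two sets A, B ⊆ N cross if A∖B, B∖A, A∩B and N∖(A∪B) are all nonempty. -/
def Crosses {N : Type*} (A B : Set N) : Prop :=
  (A \ B).Nonempty ∧ (B \ A).Nonempty ∧ (A ∩ B).Nonempty ∧ ((A ∪ B)ᶜ).Nonempty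

/-- If 𝓛 is laminar (no two members cross), S ⊆ N, and L ∈ 𝓛 crosses S, then every
member of 𝓛 crossing S∪L also crosses S; in particular the members of 𝓛 crossing
S∪L form a strict subset of the members of 𝓛 crossing S. -/
theorem stmt_6 {N : Type*} [Finite N] (𝓛 : Set (Set N))
    (hlam : ∀ A ∈ 𝓛, ∀ B ∈ 𝓛, ¬ Crosses A B)
    (S L : Set N) (hL : L ∈ 𝓛) (hcross : Crosses S L) :
    (∀ M ∈ 𝓛, Crosses M (S ∪ L) → Crosses M S) ∧
      {M | M ∈ 𝓛 ∧ Crosses M (S ∪ L)} ⊂ {M | M ∈ 𝓛 ∧ Crosses M S} := by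
  obtain ⟨hSL, hLS, hSiL, hSuL⟩ := hcross
  have main : ∀ M ∈ 𝓛, Crosses M (S ∪ L) → Crosses M S := by
    rintro M hM ⟨h1, h2, h3, h4⟩
    have hnc := hlam M hM L hL
    have hML : (M \ L).Nonempty := by
      obtain ⟨x, hx⟩ := h1
      exact ⟨x, hx.1, fun h => hx.2 (Or.inr h)⟩
    have hcML : ((M ∪ L)ᶜ).Nonempty := by
      obtain ⟨x, hx⟩ := h4
      exact ⟨x, fun h => hx (h.elim Or.inl (fun h' => Or.inr (Or.inr h')))⟩
    have hcase : L ⊆ M ∨ M ∩ L = ∅ := by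
      by_contra hcon
      push_neg at hcon
      exact hnc ⟨hML, Set.diff_nonempty.2 hcon.1, hcon.2, hcML⟩
    have hMS : (M \ S).Nonempty := h1.mono (Set.diff_subset_diff_right Set.subset_union_left)
    have hcMS : ((M ∪ S)ᶜ).Nonempty := h4.mono (Set.compl_subset_compl.2
      (Set.union_subset_union_right M Set.subset_union_left))
    rcases hcase with hLM | hdisj
    · refine ⟨hMS, ?_, ?_, hcMS⟩
      · obtain ⟨x, hx, hxM⟩ := h2
        exact ⟨x, hx.elim id (fun h => absurd (hLM h) hxM), hxM⟩
      · obtain ⟨x, hxS, hxL⟩ := hSiL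
        exact ⟨x, hLM hxL, hxS⟩
    · refine ⟨hMS, ?_, ?_, hcMS⟩
      · obtain ⟨x, hxS, hxL⟩ := hSiL
        exact ⟨x, hxS, fun h => Set.eq_empty_iff_forall_notMem.1 hdisj x ⟨h, hxL⟩⟩
      · obtain ⟨x, hxM, hxSL⟩ := h3
        exact ⟨x, hxM, hxSL.elim id
          (fun h => absurd (⟨hxM, h⟩ : x ∈ M ∩ L) (Set.eq_empty_iff_forall_notMem.1 hdisj x))⟩
  refine ⟨main, ?_, fun hsub => ?_⟩
  · rintro M ⟨hM, hc⟩
    exact ⟨hM, main M hM hc⟩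
  · have hLin : L ∈ {M | M ∈ 𝓛 ∧ Crosses M S} := by
      refine ⟨hL, ?_, hSL, ?_, ?_⟩
      · exact hLS
      · obtain ⟨x, hxS, hxL⟩ := hSiL; exact ⟨x, hxL, hxS⟩
      · exact hSuL.mono (Set.compl_subset_compl.2 (Set.union_comm L S ▸ le_refl _))
    obtain ⟨_, h1, _, _, _⟩ := hsub hLin
    obtain ⟨x, hx⟩ := h1
    exact hx.2 (Or.inr hx.1)
end

section
/- Let y be a vertex (extreme point) solution of a linear program of the form min cᵀx subject to Ax ≥ b, ℓ ≤ x ≤ u over ℝ^E, and suppose two coordinates e₁ ≠ e₂ appear with equal coefficients in every row of A (i.e., column e₁ of A equals column e₂ of A). If ℓ_{e₁} < y_{e₁} < u_{e₁} and ℓ_{e₂} < y_{e₂} < u_{e₂}, we obtain a contradiction; hence at most one of y_{e₁}, y_{e₂} can be strictly between its bounds. -/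
/-- A vertex solution of {x : Ax ≥ b, ℓ ≤ x ≤ u} cannot have two coordinates e₁ ≠ e₂
with identical columns of A both strictly between their bounds. -/
theorem stmt_7 {I E : Type*} [Fintype I] [Fintype E]
    (A : I → E → ℝ) (b : I → ℝ) (ℓ u : E → ℝ) (hlu : ∀ e, ℓ e ≤ u e)
    (e₁ e₂ : E) (hne : e₁ ≠ e₂) (hcol : ∀ i, A i e₁ = A i e₂)
    (y : E → ℝ)
    (hyfeas : (∀ i, b i ≤ ∑ e, A i e * y e) ∧ ∀ e, ℓ e ≤ y e ∧ y e ≤ u e)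
    (hvertex : ∀ x₁ x₂ : E → ℝ,
      ((∀ i, b i ≤ ∑ e, A i e * x₁ e) ∧ ∀ e, ℓ e ≤ x₁ e ∧ x₁ e ≤ u e) →
      ((∀ i, b i ≤ ∑ e, A i e * x₂ e) ∧ ∀ e, ℓ e ≤ x₂ e ∧ x₂ e ≤ u e) →
      (∀ e, y e = (x₁ e + x₂ e) / 2) → x₁ = x₂) :
    ¬ (ℓ e₁ < y e₁ ∧ y e₁ < u e₁ ∧ ℓ e₂ < y e₂ ∧ y e₂ < u e₂) := by
  classical
  rintro ⟨h1, h2, h3, h4⟩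
  set ε : ℝ := min (min (y e₁ - ℓ e₁) (u e₁ - y e₁)) (min (y e₂ - ℓ e₂) (u e₂ - y e₂)) with hε
  have hεpos : 0 < ε := by
    simp only [hε, lt_min_iff]
    refine ⟨⟨by linarith, by linarith⟩, by linarith, by linarith⟩
  have hε1 : ε ≤ y e₁ - ℓ e₁ := le_trans (min_le_left _ _) (min_le_left _ _)
  have hε2 : ε ≤ u e₁ - y e₁ := le_trans (min_le_left _ _) (min_le_right _ _)
  have hε3 : ε ≤ y e₂ - ℓ e₂ := le_trans (min_le_right _ _) (min_le_left _ _)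
  have hε4 : ε ≤ u e₂ - y e₂ := le_trans (min_le_right _ _) (min_le_right _ _)
  set d : E → ℝ := fun e => if e = e₁ then ε else if e = e₂ then -ε else 0 with hd
  have hsum : ∀ i, ∑ e, A i e * d e = 0 := by
    intro i
    have : ∀ e, A i e * d e =
        (if e = e₁ then A i e₁ * ε else 0) + (if e = e₂ then -(A i e₂ * ε) else 0) := by
      intro e
      by_cases h1' : e = e₁
      · subst h1'; simp [hd, hne]
      · by_cases h2' : e = e₂
        · subst h2'; simp [hd, h1']
        · simp [hd, h1', h2']
    rw [Finset.sum_congr rfl (fun e _ => this e), Finset.sum_add_distrib,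
      Finset.sum_ite_eq' Finset.univ e₁, Finset.sum_ite_eq' Finset.univ e₂]
    simp [hcol i]
  have hbnd : ∀ (s : ℝ), s = 1 ∨ s = -1 → ∀ e, ℓ e ≤ y e + s * d e ∧ y e + s * d e ≤ u e := by
    rintro s hs e
    obtain ⟨ha, hb⟩ := hyfeas.2 e
    by_cases h1' : e = e₁
    · subst h1'; rcases hs with h | h <;> simp [hd, h] <;> constructor <;> linarith
    · by_cases h2' : e = e₂
      · subst h2'; rcases hs with h | h <;> simp [hd, h1', h] <;> constructor <;> linarith
      · simp [hd, h1', h2', ha, hb]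
  have hfeas : ∀ (s : ℝ), s = 1 ∨ s = -1 →
      ((∀ i, b i ≤ ∑ e, A i e * (y e + s * d e)) ∧
        ∀ e, ℓ e ≤ y e + s * d e ∧ y e + s * d e ≤ u e) := by
    intro s hs
    refine ⟨fun i => ?_, hbnd s hs⟩
    have : ∑ e, A i e * (y e + s * d e) = (∑ e, A i e * y e) + s * ∑ e, A i e * d e := by
      rw [Finset.mul_sum, ← Finset.sum_add_distrib]
      exact Finset.sum_congr rfl fun e _ => by ring
    rw [this, hsum i]
    simpa using hyfeas.1 i
  have := hvertex (fun e => y e + 1 * d e) (fun e => y e + (-1) * d e)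
    (hfeas 1 (Or.inl rfl)) (hfeas (-1) (Or.inr rfl)) (fun e => by ring)
  have h := congrFun this e₁
  simp [hd] at h
  linarith
end

section
/- Suppose z : B → ℤ≥0 is a k-ECSM solution on the gadget graph H built from a tree G=(V,E) (each tree edge e replaced by two length-2 parallel paths through new vertices w_e, w'_e, plus link edges L), k odd. If for some tree edge e we have z(δ_H(w_e)) = k and z(δ_H(w'_e)) = k and z(cov(e)) = 0, then there exists a cut in H of z-value strictly less than k, contradicting feasibility. Hence z(δ_H(w_e)) + z(δ_H(w'_e)) > 2k or z(cov(e)) ≥ 1. -/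
open scoped Classical

/-- The z-load of the cut δ_H(Q) in the gadget graph H: vertices are V ⊕ (E × Bool)
(original vertices plus, for each tree edge e, the two subdivision vertices w_e, w'_e);
gadget edges are indexed by E × Bool × Bool (the edge (e, i, s) joins the subdivision
vertex (e, i) to the endpoint u e (s = false) or v e (s = true)); link edges are
indexed by Lnk with endpoints la, lb in V. -/
noncomputable def gadgetLoad {V E Lnk : Type*} [Fintype E] [Fintype Lnk]
    (u v : E → V) (la lb : Lnk → V)
    (zg : E × Bool × Bool → ℤ) (zl : Lnk → ℤ)
    (Q : Set (V ⊕ (E × Bool))) : ℤ :=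
  (∑ p : E × Bool × Bool,
      if Xor' ((Sum.inl (if p.2.2 then v p.1 else u p.1) : V ⊕ (E × Bool)) ∈ Q)
              ((Sum.inr (p.1, p.2.1) : V ⊕ (E × Bool)) ∈ Q) then zg p else 0)
    + ∑ l : Lnk,
        if Xor' ((Sum.inl (la l) : V ⊕ (E × Bool)) ∈ Q)
                ((Sum.inl (lb l) : V ⊕ (E × Bool)) ∈ Q) then zl l else 0

lemma singleton_load {V E Lnk : Type*} [Fintype E] [Fintype Lnk]
    (u v : E → V) (la lb : Lnk → V)
    (zg : E × Bool × Bool → ℤ) (zl : Lnk → ℤ) (e : E) (i : Bool) :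
    gadgetLoad u v la lb zg zl {Sum.inr (e, i)} = zg (e, i, false) + zg (e, i, true) := by
  unfold gadgetLoad
  simp only [Set.mem_singleton_iff, Xor', Fintype.sum_prod_type, Fintype.sum_bool]
  simp [Prod.ext_iff]
  trans (∑ a : E, if a = e then zg (e, i, false) + zg (e, i, true) else 0)
  · apply Finset.sum_congr rfl
    intro a _
    by_cases h : a = e
    · subst h; cases i <;> (simp; ring)
    · simp [h]
  · simp

/-- For a feasible k-ECSM solution z on the gadget graph H with k odd, and a tree edge
e with tree cut T (e is the unique tree edge crossing T, and cov(e) is the set of links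
crossing T): if z(δ_H(w_e)) = k, z(δ_H(w'_e)) = k and z(cov(e)) = 0 one obtains a cut
of value < k, a contradiction; hence z(δ_H(w_e)) + z(δ_H(w'_e)) > 2k or z(cov(e)) ≥ 1. -/
theorem stmt_16 {V E Lnk : Type*} [Fintype V] [Fintype E] [Fintype Lnk]
    (u v : E → V) (la lb : Lnk → V) (k : ℤ) (hodd : Odd k) (hk : 1 ≤ k)
    (zg : E × Bool × Bool → ℤ) (zl : Lnk → ℤ)
    (hzg : ∀ p, 0 ≤ zg p) (hzl : ∀ l, 0 ≤ zl l)
    (hfeas : ∀ Q : Set (V ⊕ (E × Bool)), Q.Nonempty → Q ≠ Set.univ →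
      k ≤ gadgetLoad u v la lb zg zl Q)
    (e : E) (T : Set V)
    (hT : ∀ e' : E, Xor' (u e' ∈ T) (v e' ∈ T) ↔ e' = e) :
    2 * k < gadgetLoad u v la lb zg zl {Sum.inr (e, false)}
          + gadgetLoad u v la lb zg zl {Sum.inr (e, true)}
      ∨ 1 ≤ ∑ l : Lnk, if Xor' (la l ∈ T) (lb l ∈ T) then zl l else 0 := by
  by_contra hcon
  push_neg at hcon
  obtain ⟨hle, hS⟩ := hcon
  rw [singleton_load, singleton_load] at hle
  -- each subdivision-vertex cut has load ≥ k
  have hsing : ∀ i : Bool, k ≤ zg (e, i, false) + zg (e, i, true) := by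
    intro i
    rw [← singleton_load u v la lb zg zl e i]
    apply hfeas
    · exact ⟨Sum.inr (e, i), rfl⟩
    · intro h
      have : (Sum.inr (e, !i) : V ⊕ (E × Bool)) ∈ ({Sum.inr (e, i)} : Set _) := by
        rw [h]; trivial
      simp at this
  have h0 := hsing false
  have h1 := hsing true
  have heq0 : zg (e, false, false) + zg (e, false, true) = k := by omega
  have heq1 : zg (e, true, false) + zg (e, true, true) = k := by omega
  obtain ⟨m, hm⟩ := hodd
  -- the crossing side chosen for each subdivision vertex
  set s : Bool → Bool := fun i => if zg (e, i, false) ≤ zg (e, i, true) then false else true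
    with hs
  have hmin : ∀ i, zg (e, i, s i) ≤ m := by
    intro i
    have ha := hzg (e, i, false)
    have hb := hzg (e, i, true)
    by_cases h : zg (e, i, false) ≤ zg (e, i, true) <;> simp [hs, h] <;> cases i <;> omega
  -- the cut set
  set f : E × Bool → Prop := fun q =>
    if q.1 = e then (if zg (e, q.2, false) ≤ zg (e, q.2, true) then v e ∈ T else u e ∈ T)
    else u q.1 ∈ T with hf
  set Q : Set (V ⊕ (E × Bool)) := {x | Sum.elim (· ∈ T) f x} with hQ
  have hmemL : ∀ x : V, ((Sum.inl x : V ⊕ (E × Bool)) ∈ Q) = (x ∈ T) := fun x => rfl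
  have hmemR : ∀ q : E × Bool, ((Sum.inr q : V ⊕ (E × Bool)) ∈ Q) = f q := fun q => rfl
  have hXe : Xor' (u e ∈ T) (v e ∈ T) := (hT e).2 rfl
  have hsame : ∀ e' : E, e' ≠ e → (u e' ∈ T ↔ v e' ∈ T) := by
    intro e' h
    have := (hT e').not.2 h
    simp [Xor'] at this
    tauto
  -- the load of Q
  have hload : gadgetLoad u v la lb zg zl Q
      = zg (e, false, s false) + zg (e, true, s true)
        + ∑ l : Lnk, if Xor' (la l ∈ T) (lb l ∈ T) then zl l else 0 := by
    unfold gadgetLoad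
    congr 1
    · simp only [Fintype.sum_prod_type, Fintype.sum_bool, hmemL, hmemR]
      trans (∑ a : E, if a = e then zg (e, false, s false) + zg (e, true, s true) else 0)
      · apply Finset.sum_congr rfl
        intro a _
        by_cases h : a = e
        · subst h
          have hcases : (u a ∈ T ∧ v a ∉ T) ∨ (v a ∈ T ∧ u a ∉ T) := by
            rcases hXe with ⟨h1, h2⟩ | ⟨h1, h2⟩
            · exact Or.inl ⟨h1, h2⟩
            · exact Or.inr ⟨h1, h2⟩
          by_cases hc0 : zg (a, false, false) ≤ zg (a, false, true) <;>
            by_cases hc1 : zg (a, true, false) ≤ zg (a, true, true) <;>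
            rcases hcases with ⟨h1, h2⟩ | ⟨h1, h2⟩ <;>
            (simp [hf, hs, hc0, hc1, h1, h2, Xor'] <;> (try split_ifs) <;> omega)
        · have hiff := hsame a h
          by_cases hu : u a ∈ T
          · have hv : v a ∈ T := hiff.1 hu
            simp [hf, h, Xor', hu, hv]
          · have hv : v a ∉ T := fun hv => hu (hiff.2 hv)
            simp [hf, h, Xor', hu, hv]
      · simp
  have hQne : Q.Nonempty := by
    rcases hXe with ⟨h1, _⟩ | ⟨h1, _⟩
    · exact ⟨Sum.inl (u e), h1⟩
    · exact ⟨Sum.inl (v e), h1⟩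
  have hQnu : Q ≠ Set.univ := by
    intro h
    rcases hXe with ⟨_, h2⟩ | ⟨_, h2⟩
    · exact h2 (by have := h ▸ Set.mem_univ (Sum.inl (v e) : V ⊕ (E × Bool)); exact this)
    · exact h2 (by have := h ▸ Set.mem_univ (Sum.inl (u e) : V ⊕ (E × Bool)); exact this)
  have hfe := hfeas Q hQne hQnu
  rw [hload] at hfe
  have hm0 := hmin false
  have hm1 := hmin true
  omega
end
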